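/- arXiv:2212.14391 — 2 statements merged into one kernel-verified Lean document; each statement's English description precedes it below -/
import Mathlib

section
/- (Proposition 1 of the paper.) Suppose ψ̃ ∈ C²(Q̄) is real-valued with ∇_xψ̃(t,x) ≠ 0 on Q̄, and suppose that 4 Σ_{m,m̃,k,ℓ=1}^n a_{mk}a_{m̃ℓ} ξ_m ξ_{m̃} ∂²_{x_kx_ℓ}ψ̃ − 2 Σ_{m,k=1}^n a_{mk} ∂_{x_m}ψ̃ · a_{(k)}(t,x,ξ',ξ') + 4 Σ_{m,k=1}^n a_{mk} ξ_m a_{(k)}(t,x,ξ',∇ψ̃) > 0 for all (t,x) ∈ Q̄ and all ξ' ∈ ℝⁿ∖{0} satisfying a(t,x,∇ψ̃,ξ') = 0. Then there exists λ₀ > 0 such that for every λ ≥ λ₀ the function e^{λψ̃} is pseudo-convex with respect to p; that is, q_{e^{λψ̃}}(t,x,ξ',τ) > 0 for every (t,x) ∈ Q̄, every τ > 0 and every ξ' ∈ ℝⁿ with a(t,x,ξ',∇ψ̃(t,x)) = 0. -/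
open Real

/-- Partial derivative along the `k`-th coordinate of a function on `ℝⁿ`. -/
noncomputable def pd {n : ℕ} {E : Type*} [NormedAddCommGroup E] [NormedSpace ℝ E]
    (k : Fin n) (F : (Fin n → ℝ) → E) (x : Fin n → ℝ) : E :=
  fderiv ℝ F x (Pi.single k 1)

/-- The quadratic form `a(t,x,u,v) = Σ_{k,j} a_{kj}(t,x) u_k v_j`. -/
noncomputable def aF {n : ℕ} (a : Fin n → Fin n → ℝ → (Fin n → ℝ) → ℝ)
    (t : ℝ) (x u v : Fin n → ℝ) : ℝ :=
  ∑ k, ∑ j, a k j t x * u k * v j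

/-- The derived quadratic form `a_{(p)}(t,x,u,v) = Σ_{k,j} ∂_{x_p} a_{kj}(t,x) u_k v_j`. -/
noncomputable def aD {n : ℕ} (a : Fin n → Fin n → ℝ → (Fin n → ℝ) → ℝ)
    (p : Fin n) (t : ℝ) (x u v : Fin n → ℝ) : ℝ :=
  ∑ k, ∑ j, pd p (fun y => a k j t y) x * u k * v j

/-- Spatial gradient. -/
noncomputable def gradx {n : ℕ} (ψ : ℝ → (Fin n → ℝ) → ℝ) (t : ℝ) (x : Fin n → ℝ) :
    Fin n → ℝ :=
  fun k => pd k (ψ t) x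

/-- Spatial Hessian entry `∂²_{x_k x_ℓ} ψ`. -/
noncomputable def hessx {n : ℕ} (ψ : ℝ → (Fin n → ℝ) → ℝ) (t : ℝ) (x : Fin n → ℝ)
    (k l : Fin n) : ℝ :=
  pd l (fun y => pd k (ψ t) y) x

/-- The symbol `q_Ψ(t,x,ξ',τ)`. -/
noncomputable def qSym {n : ℕ} (a : Fin n → Fin n → ℝ → (Fin n → ℝ) → ℝ)
    (Ψ : ℝ → (Fin n → ℝ) → ℝ) (t : ℝ) (x ξ : Fin n → ℝ) (τ : ℝ) : ℝ :=
  4 * ∑ m, ∑ m', ∑ k, ∑ l, a m k t x * a m' l t x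
      * (ξ m * ξ m' + τ ^ 2 * gradx Ψ t x m * gradx Ψ t x m') * hessx Ψ t x k l
  - 2 * ∑ m, ∑ k, a m k t x * gradx Ψ t x m
      * (aD a k t x ξ ξ - τ ^ 2 * aD a k t x (gradx Ψ t x) (gradx Ψ t x))
  + 4 * ∑ m, ∑ k, a m k t x * ξ m * aD a k t x ξ (gradx Ψ t x)

/-- The expression (ramsai) of the paper. -/
noncomputable def ramsai {n : ℕ} (a : Fin n → Fin n → ℝ → (Fin n → ℝ) → ℝ)
    (ψ : ℝ → (Fin n → ℝ) → ℝ) (t : ℝ) (x ξ : Fin n → ℝ) : ℝ :=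
  4 * ∑ m, ∑ m', ∑ k, ∑ l, a m k t x * a m' l t x * ξ m * ξ m' * hessx ψ t x k l
  - 2 * ∑ m, ∑ k, a m k t x * gradx ψ t x m * aD a k t x ξ ξ
  + 4 * ∑ m, ∑ k, a m k t x * ξ m * aD a k t x ξ (gradx ψ t x)

/-! For `Ψ = e^{λψ}` and `μ = λ e^{λψ}` one has `∇Ψ = μ ∇ψ` and `∇²Ψ = μ ∇²ψ + λμ ∇ψ ⊗ ∇ψ`.
Writing `r_Ψ` for the expression (ramsai), the symbol splits as `q_Ψ(ξ, τ) = r_Ψ(ξ) + τ² r_Ψ(∇Ψ)`,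
so on the characteristic set `a(ξ, ∇ψ) = 0`
  `q_Ψ(ξ, τ) = μ (r_ψ(ξ) + (τμ)² (r_ψ(∇ψ) + 4λ a(∇ψ, ∇ψ)²))`.
The hypothesis (with the symmetry of `a`) makes `r_ψ(ξ) ≥ 0`, and on the compact set `[0,T] × Ω̄`
ellipticity and `∇ψ ≠ 0` bound `a(∇ψ, ∇ψ)` away from zero, so the last factor is positive for
large `λ`. -/

section Algebra
variable {n : ℕ} {a : Fin n → Fin n → ℝ → (Fin n → ℝ) → ℝ} {t : ℝ} {x : Fin n → ℝ}

lemma aF_comm (ha : ∀ k j, a k j = a j k) (u v : Fin n → ℝ) : aF a t x u v = aF a t x v u := by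
  rw [aF, Finset.sum_comm]
  exact Finset.sum_congr rfl fun k _ => Finset.sum_congr rfl fun j _ => by rw [ha j k]; ring

lemma aD_smul_left (p : Fin n) (c : ℝ) (u v : Fin n → ℝ) :
    aD a p t x (c • u) v = c * aD a p t x u v := by
  simp only [aD, Finset.mul_sum, Pi.smul_apply, smul_eq_mul]
  exact Finset.sum_congr rfl fun k _ => Finset.sum_congr rfl fun j _ => by ring

lemma aD_smul_right (p : Fin n) (c : ℝ) (u v : Fin n → ℝ) :
    aD a p t x u (c • v) = c * aD a p t x u v := by
  simp only [aD, Finset.mul_sum, Pi.smul_apply, smul_eq_mul]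
  exact Finset.sum_congr rfl fun k _ => Finset.sum_congr rfl fun j _ => by ring

lemma qSym_eq_ramsai_add (Ψ : ℝ → (Fin n → ℝ) → ℝ) (ξ : Fin n → ℝ) (τ : ℝ) :
    qSym a Ψ t x ξ τ = ramsai a Ψ t x ξ + τ ^ 2 * ramsai a Ψ t x (gradx Ψ t x) := by
  set g := gradx Ψ t x
  have hess : ∑ m, ∑ m', ∑ k, ∑ l, a m k t x * a m' l t x * (ξ m * ξ m' + τ ^ 2 * g m * g m')
        * hessx Ψ t x k l
      = ∑ m, ∑ m', ∑ k, ∑ l, a m k t x * a m' l t x * ξ m * ξ m' * hessx Ψ t x k l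
        + τ ^ 2 * ∑ m, ∑ m', ∑ k, ∑ l, a m k t x * a m' l t x * g m * g m' * hessx Ψ t x k l := by
    simp only [Finset.mul_sum, ← Finset.sum_add_distrib]
    congr! 4 with m _ m' _ k _ l _
    ring
  have deriv : ∑ m, ∑ k, a m k t x * g m * (aD a k t x ξ ξ - τ ^ 2 * aD a k t x g g)
      = ∑ m, ∑ k, a m k t x * g m * aD a k t x ξ ξ
        - τ ^ 2 * ∑ m, ∑ k, a m k t x * g m * aD a k t x g g := by
    simp only [Finset.mul_sum, ← Finset.sum_sub_distrib]
    congr! 2 with m _ k _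
    ring
  rw [qSym, hess, deriv, ramsai, ramsai]
  ring

lemma ramsai_smul (ψ : ℝ → (Fin n → ℝ) → ℝ) (c : ℝ) (v : Fin n → ℝ) :
    ramsai a ψ t x (c • v) = c ^ 2 * ramsai a ψ t x v := by
  rw [ramsai, ramsai, mul_add, mul_sub, mul_left_comm _ (4 : ℝ), mul_left_comm _ (2 : ℝ),
    mul_left_comm _ (4 : ℝ)]
  simp only [Finset.mul_sum, Pi.smul_apply, smul_eq_mul, aD_smul_left, aD_smul_right]
  congr 2
  · congr! 4
    ring
  · congr! 2
    ring
  · congr! 2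
    ring

lemma sq_aF (u v : Fin n → ℝ) :
    aF a t x u v ^ 2 = ∑ m, ∑ m', ∑ k, ∑ l, a m k t x * a m' l t x * u m * u m' * v k * v l := by
  simp only [sq, aF, Finset.sum_mul_sum]
  congr! 4 with m _ m' _ k _ l _
  ring

lemma ramsai_eq_of_gradx_hessx {ψ Ψ : ℝ → (Fin n → ℝ) → ℝ} {μ ν : ℝ}
    (hg : gradx Ψ t x = μ • gradx ψ t x)
    (hH : ∀ k l, hessx Ψ t x k l = μ * hessx ψ t x k l + ν * gradx ψ t x k * gradx ψ t x l)
    (v : Fin n → ℝ) :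
    ramsai a Ψ t x v = μ * ramsai a ψ t x v + 4 * ν * aF a t x v (gradx ψ t x) ^ 2 := by
  have hess : ∑ m, ∑ m', ∑ k, ∑ l, a m k t x * a m' l t x * v m * v m' * hessx Ψ t x k l
      = μ * ∑ m, ∑ m', ∑ k, ∑ l, a m k t x * a m' l t x * v m * v m' * hessx ψ t x k l
        + ν * aF a t x v (gradx ψ t x) ^ 2 := by
    simp only [sq_aF, hH, Finset.mul_sum, ← Finset.sum_add_distrib]
    congr! 4 with m _ m' _ k _ l _
    ring
  have grad : ∑ m, ∑ k, a m k t x * gradx Ψ t x m * aD a k t x v v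
      = μ * ∑ m, ∑ k, a m k t x * gradx ψ t x m * aD a k t x v v := by
    simp only [hg, Pi.smul_apply, smul_eq_mul, Finset.mul_sum]
    congr! 2 with m _ k _
    ring
  have deriv : ∑ m, ∑ k, a m k t x * v m * aD a k t x v (gradx Ψ t x)
      = μ * ∑ m, ∑ k, a m k t x * v m * aD a k t x v (gradx ψ t x) := by
    simp only [hg, aD_smul_right, Finset.mul_sum]
    congr! 2 with m _ k _
    ring
  rw [ramsai, ramsai, hess, grad, deriv]
  ring

end Algebra

section Calculus
variable {n : ℕ}

lemma pd_exp_mul {f : (Fin n → ℝ) → ℝ} {x : Fin n → ℝ} (hf : DifferentiableAt ℝ f x)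
    (c : ℝ) (k : Fin n) :
    pd k (fun y => exp (c * f y)) x = c * exp (c * f x) * pd k f x := by
  rw [pd, fderiv_exp (hf.const_mul c), fderiv_const_mul hf c]
  simp only [smul_apply, smul_eq_mul, pd]
  ring

lemma pd_pd_exp_mul {f : (Fin n → ℝ) → ℝ} {x : Fin n → ℝ} {k : Fin n} (hf : Differentiable ℝ f)
    (hfk : DifferentiableAt ℝ (fun y => pd k f y) x) (c : ℝ) (l : Fin n) :
    pd l (fun y => pd k (fun z => exp (c * f z)) y) x
      = c * exp (c * f x) * pd l (fun y => pd k f y) x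
        + c ^ 2 * exp (c * f x) * pd k f x * pd l f x := by
  have hexp : DifferentiableAt ℝ (fun y => c * exp (c * f y)) x :=
    ((hf x).const_mul c).exp.const_mul c
  simp_rw [pd_exp_mul (hf _)]
  rw [pd, fderiv_fun_mul hexp hfk, fderiv_const_mul ((hf x).const_mul c).exp c]
  simp only [add_apply, smul_apply, smul_eq_mul]
  have hl := pd_exp_mul (hf x) c l
  unfold pd at hl ⊢
  rw [hl]
  ring

variable {V : Type*} [NormedAddCommGroup V] [NormedSpace ℝ V] {F : ℝ × (Fin n → ℝ) → V}

lemma pd_comp_prodMk {t : ℝ} {x : Fin n → ℝ} (hF : DifferentiableAt ℝ F (t, x)) (k : Fin n) :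
    pd k (fun y => F (t, y)) x = fderiv ℝ F (t, x) (0, Pi.single k 1) := by
  have h : HasFDerivAt (fun y => F (t, y))
      ((fderiv ℝ F (t, x)).comp (ContinuousLinearMap.inr ℝ ℝ (Fin n → ℝ))) x :=
    hF.hasFDerivAt.comp x (hasFDerivAt_prodMk_right t x)
  rw [pd, h.fderiv]
  rfl

lemma contDiff_pd_comp_prodMk {m : WithTop ℕ∞} (hF : ContDiff ℝ (m + 1) F) (k : Fin n) :
    ContDiff ℝ m (fun p : ℝ × (Fin n → ℝ) => pd k (fun y => F (p.1, y)) p.2) := by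
  have hdiff : Differentiable ℝ F := hF.differentiable (by simp)
  simp_rw [pd_comp_prodMk (hdiff _)]
  exact (hF.fderiv_right le_rfl).clm_apply contDiff_const

lemma differentiable_comp_prodMk {m : WithTop ℕ∞} (hF : ContDiff ℝ m F) (hm : m ≠ 0) (t : ℝ) :
    Differentiable ℝ (fun y => F (t, y)) :=
  (hF.comp (contDiff_prodMk_right t)).differentiable hm

lemma continuous_pd_comp_prodMk (hF : ContDiff ℝ 1 F) (k : Fin n) :
    Continuous (fun p : ℝ × (Fin n → ℝ) => pd k (fun y => F (p.1, y)) p.2) :=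
  (contDiff_pd_comp_prodMk (m := 0) (by simpa using hF) k).continuous

end Calculus

section Exponential
variable {n : ℕ} {a : Fin n → Fin n → ℝ → (Fin n → ℝ) → ℝ} {ψ : ℝ → (Fin n → ℝ) → ℝ}
  {t : ℝ} {x : Fin n → ℝ}

lemma gradx_exp_mul (hψ : DifferentiableAt ℝ (ψ t) x) (lam : ℝ) :
    gradx (fun s y => exp (lam * ψ s y)) t x = (lam * exp (lam * ψ t x)) • gradx ψ t x :=
  funext fun k => pd_exp_mul hψ lam k

lemma ramsai_exp_mul (hψ : Differentiable ℝ (ψ t))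
    (hψ' : ∀ k, DifferentiableAt ℝ (fun y => pd k (ψ t) y) x) (lam : ℝ) (v : Fin n → ℝ) :
    ramsai a (fun s y => exp (lam * ψ s y)) t x v
      = lam * exp (lam * ψ t x) * (ramsai a ψ t x v + 4 * lam * aF a t x v (gradx ψ t x) ^ 2) := by
  rw [ramsai_eq_of_gradx_hessx (gradx_exp_mul (hψ x) lam)
    (fun k l => pd_pd_exp_mul hψ (hψ' k) lam l)]
  ring

lemma qSym_exp_mul (hψ : Differentiable ℝ (ψ t))
    (hψ' : ∀ k, DifferentiableAt ℝ (fun y => pd k (ψ t) y) x) (lam : ℝ) (ξ : Fin n → ℝ) (τ : ℝ) :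
    qSym a (fun s y => exp (lam * ψ s y)) t x ξ τ
      = lam * exp (lam * ψ t x) *
        (ramsai a ψ t x ξ + 4 * lam * aF a t x ξ (gradx ψ t x) ^ 2
          + (τ * lam * exp (lam * ψ t x)) ^ 2 * (ramsai a ψ t x (gradx ψ t x)
            + 4 * lam * aF a t x (gradx ψ t x) (gradx ψ t x) ^ 2)) := by
  rw [qSym_eq_ramsai_add, gradx_exp_mul (hψ x), ramsai_smul, ramsai_exp_mul hψ hψ',
    ramsai_exp_mul hψ hψ']
  ring

end Exponential

section Continuity
variable {n : ℕ} {a : Fin n → Fin n → ℝ → (Fin n → ℝ) → ℝ} {ψ : ℝ → (Fin n → ℝ) → ℝ}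

lemma continuous_aF_gradx (ha : ∀ k j, Continuous fun p : ℝ × (Fin n → ℝ) => a k j p.1 p.2)
    (hψ : ContDiff ℝ 1 fun p : ℝ × (Fin n → ℝ) => ψ p.1 p.2) :
    Continuous fun p : ℝ × (Fin n → ℝ) => aF a p.1 p.2 (gradx ψ p.1 p.2) (gradx ψ p.1 p.2) := by
  have hg := continuous_pd_comp_prodMk hψ
  unfold aF gradx
  fun_prop

lemma continuous_ramsai_gradx (ha : ∀ k j, ContDiff ℝ 1 fun p : ℝ × (Fin n → ℝ) => a k j p.1 p.2)
    (hψ : ContDiff ℝ 2 fun p : ℝ × (Fin n → ℝ) => ψ p.1 p.2) :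
    Continuous fun p : ℝ × (Fin n → ℝ) => ramsai a ψ p.1 p.2 (gradx ψ p.1 p.2) := by
  have hc := fun k j => (ha k j).continuous
  have hda := fun k j => continuous_pd_comp_prodMk (ha k j)
  have hg := continuous_pd_comp_prodMk (hψ.of_le one_le_two)
  have hH := fun k => continuous_pd_comp_prodMk (contDiff_pd_comp_prodMk (m := 1) hψ k)
  unfold ramsai aD gradx hessx
  fun_prop

end Continuity

lemma IsCompact.exists_pos_forall_add_mul_pos {X : Type*} [TopologicalSpace X] {K : Set X}
    (hK : IsCompact K) {f g : X → ℝ} (hf : ContinuousOn f K) (hg : ContinuousOn g K)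
    (hgpos : ∀ p ∈ K, 0 < g p) :
    ∃ c₀ > 0, ∀ c ≥ c₀, ∀ p ∈ K, 0 < f p + c * g p := by
  obtain ⟨C, hC⟩ := hK.bddAbove_image (hf.neg.div hg fun p hp => (hgpos p hp).ne')
  refine ⟨max 1 (C + 1), by positivity, fun c hc p hp => ?_⟩
  have hfg : -f p / g p < c :=
    (hC ⟨p, hp, rfl⟩).trans_lt ((lt_add_one C).trans_le ((le_max_right _ _).trans hc))
  rw [div_lt_iff₀ (hgpos p hp)] at hfg
  linarith

section Ellipticity
variable {n : ℕ}

lemma sum_sq_pos {v : Fin n → ℝ} (hv : v ≠ 0) : 0 < ∑ i, v i ^ 2 := by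
  obtain ⟨i, hi⟩ := Function.ne_iff.mp hv
  exact Finset.sum_pos' (fun j _ => sq_nonneg _) ⟨i, Finset.mem_univ i, sq_pos_of_ne_zero hi⟩

lemma le_aF_self_of_mem_closure {a : Fin n → Fin n → ℝ → (Fin n → ℝ) → ℝ}
    (ha : ∀ k j, Continuous fun p : ℝ × (Fin n → ℝ) => a k j p.1 p.2) {β : ℝ} {η : Fin n → ℝ}
    {s : Set (ℝ × (Fin n → ℝ))} (hs : ∀ p ∈ s, β * ∑ i, η i ^ 2 ≤ aF a p.1 p.2 η η)
    {p : ℝ × (Fin n → ℝ)} (hp : p ∈ closure s) :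
    β * ∑ i, η i ^ 2 ≤ aF a p.1 p.2 η η := by
  have hcont : Continuous fun q : ℝ × (Fin n → ℝ) => aF a q.1 q.2 η η := by
    unfold aF
    fun_prop
  exact closure_minimal hs (isClosed_le continuous_const hcont) hp

end Ellipticity

theorem statement1
    (n : ℕ) (Ω : Set (Fin n → ℝ)) (hΩ : Bornology.IsBounded Ω) (T : ℝ) (hT : 0 < T)
    (a : Fin n → Fin n → ℝ → (Fin n → ℝ) → ℝ)
    (ha_symm : ∀ k j, a k j = a j k)
    (ha_reg : ∀ k j, ContDiff ℝ 1 (fun p : ℝ × (Fin n → ℝ) => a k j p.1 p.2))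
    (β : ℝ) (hβ : 0 < β)
    (ha_ell : ∀ t ∈ Set.Ioo (0:ℝ) T, ∀ x ∈ Ω, ∀ η : Fin n → ℝ,
      β * ∑ i, η i ^ 2 ≤ ∑ k, ∑ j, a k j t x * η k * η j)
    (ψ : ℝ → (Fin n → ℝ) → ℝ)
    (hψ : ContDiff ℝ 2 (fun p : ℝ × (Fin n → ℝ) => ψ p.1 p.2))
    (hgrad : ∀ t ∈ Set.Icc (0:ℝ) T, ∀ x ∈ closure Ω, gradx ψ t x ≠ 0)
    -- the pseudo-convexity inequality (ramsai) on the characteristic set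
    (hpos : ∀ t ∈ Set.Icc (0:ℝ) T, ∀ x ∈ closure Ω, ∀ ξ : Fin n → ℝ, ξ ≠ 0 →
      aF a t x (gradx ψ t x) ξ = 0 → 0 < ramsai a ψ t x ξ) :
    ∃ lam₀ > (0:ℝ), ∀ lam ≥ lam₀, ∀ t ∈ Set.Icc (0:ℝ) T, ∀ x ∈ closure Ω,
      ∀ τ > (0:ℝ), ∀ ξ : Fin n → ℝ, aF a t x ξ (gradx ψ t x) = 0 →
        0 < qSym a (fun s y => Real.exp (lam * ψ s y)) t x ξ τ := by
  have hK : IsCompact (Set.Icc 0 T ×ˢ closure Ω) := isCompact_Icc.prod hΩ.isCompact_closure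
  have hK_eq : Set.Icc 0 T ×ˢ closure Ω = closure (Set.Ioo 0 T ×ˢ Ω) := by
    rw [closure_prod_eq, closure_Ioo hT.ne]
  have hB : ∀ p ∈ Set.Icc 0 T ×ˢ closure Ω,
      0 < 4 * aF a p.1 p.2 (gradx ψ p.1 p.2) (gradx ψ p.1 p.2) ^ 2 := by
    intro p hp
    have hell := le_aF_self_of_mem_closure (fun k j => (ha_reg k j).continuous)
      (η := gradx ψ p.1 p.2) (fun q hq => ha_ell q.1 hq.1 q.2 hq.2 _) (hK_eq ▸ hp)
    have := (mul_pos hβ (sum_sq_pos (hgrad p.1 hp.1 p.2 hp.2))).trans_le hell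
    positivity
  have hB_cont := continuous_aF_gradx (fun k j => (ha_reg k j).continuous) (hψ.of_le one_le_two)
  obtain ⟨lam₀, hlam₀, hlarge⟩ := hK.exists_pos_forall_add_mul_pos
    (continuous_ramsai_gradx ha_reg hψ).continuousOn (Continuous.continuousOn (by fun_prop)) hB
  refine ⟨lam₀, hlam₀, fun lam hlam t ht x hx τ hτ ξ hξ => ?_⟩
  have hram : 0 ≤ ramsai a ψ t x ξ := by
    rcases eq_or_ne ξ 0 with rfl | hξ0
    · simp [ramsai, aD]
    · exact (hpos t ht x hx ξ hξ0 (by rwa [aF_comm ha_symm])).le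
  have hτ_coeff := hlarge lam hlam (t, x) ⟨ht, hx⟩
  dsimp only at hτ_coeff
  rw [qSym_exp_mul (differentiable_comp_prodMk hψ two_ne_zero t)
    (fun k => differentiable_comp_prodMk (contDiff_pd_comp_prodMk (m := 1) hψ k) one_ne_zero t x),
    hξ]
  have hlam_pos : 0 < lam := hlam₀.trans_le hlam
  have hσ : 0 < (τ * lam * exp (lam * ψ t x)) ^ 2 :=
    pow_pos (mul_pos (mul_pos hτ hlam_pos) (exp_pos _)) 2
  refine mul_pos (mul_pos hlam_pos (exp_pos _)) ?_
  linarith [mul_pos hσ hτ_coeff]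
end

section
/- Let ψ ∈ C²(Q̄) be real-valued with ∇_xψ(t,x) ≠ 0 on Q̄, and for λ > 0 set φ(t,x) = e^{λψ(t,x)}/t. Then there exist λ₀ > 0 and C > 0 such that for every λ ≥ λ₀, every (t,x) ∈ Q and every τ > 0, 4τ²λ³φ³ Σ_{m,m̃,k,ℓ=1}^n a_{mk}a_{m̃ℓ} ∂_{x_m}ψ ∂_{x_{m̃}}ψ ∂²_{x_kx_ℓ}ψ + 4τ²λ⁴φ³ a(t,x,∇ψ,∇ψ)² + 2τ²λ³φ³ Σ_{m,k=1}^n a_{mk} ∂_{x_m}ψ a_{(k)}(t,x,∇ψ,∇ψ) ≥ C τ² λ² φ³; that is, the part of q_α that is quadratic in τ dominates Cτ²λ²φ³ for all sufficiently large λ. -/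
/-! On the compact set `[0,T] × closure Ω` the continuous function `|∇ₓψ|²` is positive, hence
bounded below by some `g > 0`, so ellipticity gives `a(∇ψ,∇ψ) ≥ βg`; the continuous coefficient
of `λ³` is bounded below by some `M`. After dividing by `τ²φ³ > 0` the claim becomes
`λ² ≤ λ³ B + 4 λ⁴ A²` with `A ≥ βg` and `B ≥ M`, which holds with `C = 1` as soon as
`λ ≥ max 1 ((1 - M) / (4 (βg)²))`: the `λ⁴` term dominates. -/

open Real

noncomputable def cubicCoeff {n : ℕ} (a : Fin n → Fin n → ℝ → (Fin n → ℝ) → ℝ)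
    (ψ : ℝ → (Fin n → ℝ) → ℝ) (t : ℝ) (x : Fin n → ℝ) : ℝ :=
  4 * ∑ m, ∑ m', ∑ k, ∑ l, a m k t x * a m' l t x
      * gradx ψ t x m * gradx ψ t x m' * hessx ψ t x k l
  + 2 * ∑ m, ∑ k, a m k t x * gradx ψ t x m * aD a k t x (gradx ψ t x) (gradx ψ t x)

lemma pd_eq_fderiv_apply {n : ℕ} {H : ℝ × (Fin n → ℝ) → ℝ} {t : ℝ} {x : Fin n → ℝ}
    (hH : DifferentiableAt ℝ H (t, x)) (k : Fin n) :
    pd k (fun y => H (t, y)) x = fderiv ℝ H (t, x) (0, Pi.single k 1) := by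
  have hslice : HasFDerivAt (fun y => H (t, y))
      ((fderiv ℝ H (t, x)).comp ((0 : (Fin n → ℝ) →L[ℝ] ℝ).prod (.id ℝ _))) x :=
    hH.hasFDerivAt.comp x ((hasFDerivAt_const t x).prodMk (hasFDerivAt_id x))
  rw [pd, hslice.fderiv]
  rfl

lemma contDiff_pd {n m : ℕ} {H : ℝ × (Fin n → ℝ) → ℝ} (hH : ContDiff ℝ (m + 1) H)
    (k : Fin n) : ContDiff ℝ m fun p : ℝ × (Fin n → ℝ) => pd k (fun y => H (p.1, y)) p.2 := by
  have hfd : (fun p : ℝ × (Fin n → ℝ) => pd k (fun y => H (p.1, y)) p.2) =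
      fun p => fderiv ℝ H p (0, Pi.single k 1) :=
    funext fun p => pd_eq_fderiv_apply ((hH.differentiable (by simp)) p) k
  rw [hfd]
  exact (hH.fderiv_right (by norm_cast)).clm_apply contDiff_const

lemma continuous_gradx {n : ℕ} {ψ : ℝ → (Fin n → ℝ) → ℝ}
    (hψ : ContDiff ℝ 2 (fun p : ℝ × (Fin n → ℝ) => ψ p.1 p.2)) (k : Fin n) :
    Continuous fun p : ℝ × (Fin n → ℝ) => gradx ψ p.1 p.2 k :=
  (contDiff_pd (m := 1) hψ k).continuous

lemma continuous_hessx {n : ℕ} {ψ : ℝ → (Fin n → ℝ) → ℝ}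
    (hψ : ContDiff ℝ 2 (fun p : ℝ × (Fin n → ℝ) => ψ p.1 p.2)) (k l : Fin n) :
    Continuous fun p : ℝ × (Fin n → ℝ) => hessx ψ p.1 p.2 k l :=
  (contDiff_pd (m := 0) (contDiff_pd (m := 1) hψ k) l).continuous

lemma continuous_cubicCoeff {n : ℕ} {a : Fin n → Fin n → ℝ → (Fin n → ℝ) → ℝ}
    (ha : ∀ k j, ContDiff ℝ 1 (fun p : ℝ × (Fin n → ℝ) => a k j p.1 p.2))
    {ψ : ℝ → (Fin n → ℝ) → ℝ} (hψ : ContDiff ℝ 2 (fun p : ℝ × (Fin n → ℝ) => ψ p.1 p.2)) :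
    Continuous fun p : ℝ × (Fin n → ℝ) => cubicCoeff a ψ p.1 p.2 := by
  have := continuous_gradx hψ
  have := continuous_hessx hψ
  have := fun k j => (ha k j).continuous
  have := fun k j p => (contDiff_pd (m := 0) (ha k j) p).continuous
  simp only [cubicCoeff, aD]
  fun_prop

lemma sum_sq_pos_of_ne_zero {ι : Type*} [Fintype ι] {η : ι → ℝ} (hη : η ≠ 0) :
    0 < ∑ i, η i ^ 2 := by
  obtain ⟨i, hi⟩ := Function.ne_iff.mp hη
  exact Finset.sum_pos' (fun j _ => sq_nonneg _) ⟨i, Finset.mem_univ i, sq_pos_of_ne_zero hi⟩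

lemma sq_le_cube_mul_add_quartic {lam c A B M : ℝ} (hc : 0 < c) (hA : c ≤ A) (hB : M ≤ B)
    (hlam₁ : 1 ≤ lam) (hlam : (1 - M) / (4 * c ^ 2) ≤ lam) :
    lam ^ 2 ≤ lam ^ 3 * B + 4 * lam ^ 4 * A ^ 2 := by
  have hM : 1 - M ≤ 4 * c ^ 2 * lam := (div_le_iff₀' (by positivity)).mp hlam
  have hA2 : c ^ 2 ≤ A ^ 2 := pow_le_pow_left₀ hc.le hA 2
  have hlam₀ : 0 ≤ lam := by linarith
  calc lam ^ 2 ≤ lam ^ 3 * 1 := by nlinarith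
    _ ≤ lam ^ 3 * (B + 4 * lam * A ^ 2) := by gcongr; nlinarith
    _ = lam ^ 3 * B + 4 * lam ^ 4 * A ^ 2 := by ring

theorem statement4_general
    (n : ℕ) (Ω : Set (Fin n → ℝ)) (hΩ : Bornology.IsBounded Ω) (T : ℝ)
    (a : Fin n → Fin n → ℝ → (Fin n → ℝ) → ℝ)
    (ha_reg : ∀ k j, ContDiff ℝ 1 (fun p : ℝ × (Fin n → ℝ) => a k j p.1 p.2))
    (β : ℝ) (hβ : 0 < β)
    (ha_ell : ∀ t ∈ Set.Ioo (0:ℝ) T, ∀ x ∈ Ω, ∀ η : Fin n → ℝ,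
      β * ∑ i, η i ^ 2 ≤ ∑ k, ∑ j, a k j t x * η k * η j)
    (ψ : ℝ → (Fin n → ℝ) → ℝ)
    (hψ : ContDiff ℝ 2 (fun p : ℝ × (Fin n → ℝ) => ψ p.1 p.2))
    (hgrad : ∀ t ∈ Set.Icc (0:ℝ) T, ∀ x ∈ closure Ω, gradx ψ t x ≠ 0) :
    ∃ lam₀ > (0:ℝ), ∃ C > (0:ℝ), ∀ lam ≥ lam₀, ∀ t ∈ Set.Ioo (0:ℝ) T, ∀ x ∈ Ω,
      ∀ τ > (0:ℝ),
      C * τ ^ 2 * lam ^ 2 * (Real.exp (lam * ψ t x) / t) ^ 3 ≤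
        4 * τ ^ 2 * lam ^ 3 * (Real.exp (lam * ψ t x) / t) ^ 3
            * ∑ m, ∑ m', ∑ k, ∑ l, a m k t x * a m' l t x
                * gradx ψ t x m * gradx ψ t x m' * hessx ψ t x k l
        + 4 * τ ^ 2 * lam ^ 4 * (Real.exp (lam * ψ t x) / t) ^ 3
            * aF a t x (gradx ψ t x) (gradx ψ t x) ^ 2
        + 2 * τ ^ 2 * lam ^ 3 * (Real.exp (lam * ψ t x) / t) ^ 3
            * ∑ m, ∑ k, a m k t x * gradx ψ t x m
                * aD a k t x (gradx ψ t x) (gradx ψ t x) := by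
  have hK : IsCompact (Set.Icc 0 T ×ˢ closure Ω) := isCompact_Icc.prod hΩ.isCompact_closure
  obtain ⟨g, hg, hgK⟩ := hK.exists_forall_le'
    (continuous_finsetSum _ fun i _ => (continuous_gradx hψ i).pow 2).continuousOn
    fun p hp => sum_sq_pos_of_ne_zero (hgrad p.1 hp.1 p.2 hp.2)
  obtain ⟨M, hM⟩ := hK.bddBelow_image (continuous_cubicCoeff ha_reg hψ).continuousOn
  refine ⟨max 1 ((1 - M) / (4 * (β * g) ^ 2)), by positivity, 1, one_pos, ?_⟩
  intro lam hlam t ht x hx τ _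
  have htx : (t, x) ∈ Set.Icc 0 T ×ˢ closure Ω := ⟨⟨ht.1.le, ht.2.le⟩, subset_closure hx⟩
  have hA : β * g ≤ aF a t x (gradx ψ t x) (gradx ψ t x) :=
    (mul_le_mul_of_nonneg_left (hgK _ htx) hβ.le).trans (ha_ell t ht x hx _)
  have key := sq_le_cube_mul_add_quartic (mul_pos hβ hg) hA (hM ⟨_, htx, rfl⟩)
    (le_of_max_le_left hlam) (le_of_max_le_right hlam)
  have hw : 0 ≤ τ ^ 2 * (Real.exp (lam * ψ t x) / t) ^ 3 := by have := ht.1; positivity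
  have hscaled := mul_le_mul_of_nonneg_left key hw
  dsimp only [cubicCoeff] at hscaled
  linear_combination hscaled

theorem statement4
    (n : ℕ) (Ω : Set (Fin n → ℝ)) (hΩ : Bornology.IsBounded Ω) (T : ℝ) (hT : 0 < T)
    (a : Fin n → Fin n → ℝ → (Fin n → ℝ) → ℝ)
    (ha_symm : ∀ k j, a k j = a j k)
    (ha_reg : ∀ k j, ContDiff ℝ 1 (fun p : ℝ × (Fin n → ℝ) => a k j p.1 p.2))
    (β : ℝ) (hβ : 0 < β)
    (ha_ell : ∀ t ∈ Set.Ioo (0:ℝ) T, ∀ x ∈ Ω, ∀ η : Fin n → ℝ,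
      β * ∑ i, η i ^ 2 ≤ ∑ k, ∑ j, a k j t x * η k * η j)
    (ψ : ℝ → (Fin n → ℝ) → ℝ)
    (hψ : ContDiff ℝ 2 (fun p : ℝ × (Fin n → ℝ) => ψ p.1 p.2))
    (hgrad : ∀ t ∈ Set.Icc (0:ℝ) T, ∀ x ∈ closure Ω, gradx ψ t x ≠ 0) :
    ∃ lam₀ > (0:ℝ), ∃ C > (0:ℝ), ∀ lam ≥ lam₀, ∀ t ∈ Set.Ioo (0:ℝ) T, ∀ x ∈ Ω,
      ∀ τ > (0:ℝ),
      C * τ ^ 2 * lam ^ 2 * (Real.exp (lam * ψ t x) / t) ^ 3 ≤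
        4 * τ ^ 2 * lam ^ 3 * (Real.exp (lam * ψ t x) / t) ^ 3
            * ∑ m, ∑ m', ∑ k, ∑ l, a m k t x * a m' l t x
                * gradx ψ t x m * gradx ψ t x m' * hessx ψ t x k l
        + 4 * τ ^ 2 * lam ^ 4 * (Real.exp (lam * ψ t x) / t) ^ 3
            * aF a t x (gradx ψ t x) (gradx ψ t x) ^ 2
        + 2 * τ ^ 2 * lam ^ 3 * (Real.exp (lam * ψ t x) / t) ^ 3
            * ∑ m, ∑ k, a m k t x * gradx ψ t x m
                * aD a k t x (gradx ψ t x) (gradx ψ t x) :=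
  statement4_general n Ω hΩ T a ha_reg β hβ ha_ell ψ hψ hgrad
end
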